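/- Let R be a ring, σ an automorphism of R, δ a σ-derivation of R, S = R[x; σ, δ], and M a right R-module. If m = m₀ + ⋯ + m_k x^k ∈ M ⊗_R S is a good polynomial with leading coefficient m_k ≠ 0, then the right annihilator of m in R equals σ^{-k}(ann_R(m_k)), i.e., ann_R(m) = {r ∈ R | σ^k(r) ∈ ann_R(m_k)}. -/
import Mathlib


open MulOpposite

/-- `δ` is a `σ`-derivation of the ring `R`. -/
def IsSigmaDeriv {R : Type} [Ring R] (σ : R ≃+* R) (δ : R → R) : Prop :=
  (∀ a b, δ (a + b) = δ a + δ b) ∧ ∀ a b, δ (a * b) = σ a * δ b + δ a * b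

/-- A presentation of the skew polynomial ring `S = R[x; σ, δ]`: `S` is a ring containing an
image of `R` via `ι`, with an element `x` satisfying `x·r = σ(r)·x + δ(r)`, and `S` is free
as a left `R`-module with basis the powers of `x`. -/
structure SkewPoly (R S : Type) [Ring R] [Ring S] (σ : R ≃+* R) (δ : R → R) : Type where
  ι : R →+* S
  x : S
  comm : ∀ r : R, x * ι r = ι (σ r) * x + ι (δ r)
  basis : Function.Bijective fun c : ℕ →₀ R => c.sum fun i a => ι a * x ^ i

/-- A presentation of the induced right `S`-module `M ⊗_R S` of a right `R`-module `M`
(right modules are encoded as modules over the opposite ring): `N` is a right `S`-module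
containing `M` via `j`, compatibly with the right `R`-actions, and every element of `N` is
uniquely a polynomial `∑ (j mᵢ)·xⁱ` with coefficients in `M`. -/
structure Induced (R S M N : Type) [Ring R] [Ring S] [AddCommGroup M] [Module Rᵐᵒᵖ M]
    [AddCommGroup N] [Module Sᵐᵒᵖ N] {σ : R ≃+* R} {δ : R → R}
    (sp : SkewPoly R S σ δ) : Type where
  j : M →+ N
  j_smul : ∀ (r : R) (m : M), j (op r • m) = op (sp.ι r) • j m
  free : Function.Bijective fun c : ℕ →₀ M => c.sum fun i m => op (sp.x ^ i) • j m

variable {R S M N : Type} [Ring R] [Ring S] [AddCommGroup M] [Module Rᵐᵒᵖ M]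
  [AddCommGroup N] [Module Sᵐᵒᵖ N] {σ : R ≃+* R} {δ : R → R}

/-- The polynomial `∑ (j mᵢ)·xⁱ` in `M ⊗_R S` with coefficient family `c`. -/
def pol (sp : SkewPoly R S σ δ) (im : Induced R S M N sp) (c : ℕ →₀ M) : N :=
  c.sum fun i m => op (sp.x ^ i) • im.j m

/-- `ν ∈ M ⊗_R S` has degree exactly `k`. -/
def DegEq (sp : SkewPoly R S σ δ) (im : Induced R S M N sp) (ν : N) (k : ℕ) : Prop :=
  ∃ c : ℕ →₀ M, pol sp im c = ν ∧ c k ≠ 0 ∧ ∀ i, k < i → c i = 0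

/-- `ν` is a good polynomial of degree `k`: whenever `ν·r ≠ 0` for `r ∈ R`,
`deg (ν·r) = deg ν = k`. -/
def GoodAt (sp : SkewPoly R S σ δ) (im : Induced R S M N sp) (ν : N) (k : ℕ) : Prop :=
  DegEq sp im ν k ∧ ∀ r : R, op (sp.ι r) • ν ≠ 0 → DegEq sp im (op (sp.ι r) • ν) k

/-- `ν` is a good polynomial. -/
def Good (sp : SkewPoly R S σ δ) (im : Induced R S M N sp) (ν : N) : Prop :=
  ∃ k, GoodAt sp im ν k

section Aux

variable (sp : SkewPoly R S σ δ) (im : Induced R S M N sp)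

lemma pol_zero : pol sp im 0 = 0 := Finsupp.sum_zero_index

lemma pol_single (i : ℕ) (m : M) : pol sp im (Finsupp.single i m) = op (sp.x ^ i) • im.j m :=
  Finsupp.sum_single_index (by simp)

lemma pol_add (c c' : ℕ →₀ M) : pol sp im (c + c') = pol sp im c + pol sp im c' :=
  Finsupp.sum_add_index' (fun i => by simp) (fun i m m' => by rw [map_add, smul_add])

lemma pol_injective : Function.Injective (pol sp im) := im.free.injective

lemma x_smul_pol (d : ℕ →₀ M) :
    op sp.x • pol sp im d = pol sp im (d.mapDomain Nat.succ) := by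
  rw [pol, pol, Finsupp.sum_mapDomain_index (by simp) (fun i m m' => by rw [map_add, smul_add])]
  rw [Finsupp.sum, Finsupp.sum, Finset.smul_sum]
  refine Finset.sum_congr rfl fun i _ => ?_
  rw [← mul_smul, ← op_mul, ← pow_succ]

lemma key (i : ℕ) (r : R) (m : M) :
    ∃ d : ℕ →₀ M, op (sp.ι r) • (op (sp.x ^ i) • im.j m) = pol sp im d ∧
      d i = op ((⇑σ)^[i] r) • m ∧ ∀ l, i < l → d l = 0 := by
  induction i generalizing r with
  | zero =>
    refine ⟨Finsupp.single 0 (op r • m), ?_, by simp,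
      fun l hl => Finsupp.single_eq_of_ne (by omega)⟩
    rw [pol_single, pow_zero, op_one, one_smul, one_smul, ← im.j_smul]
  | succ i ih =>
    obtain ⟨d₁, h₁, h₁i, h₁top⟩ := ih (σ r)
    obtain ⟨d₂, h₂, h₂i, h₂top⟩ := ih (δ r)
    refine ⟨d₁.mapDomain Nat.succ + d₂, ?_, ?_, ?_⟩
    · rw [← mul_smul, ← op_mul]
      have hx : sp.x ^ (i + 1) * sp.ι r
          = sp.x ^ i * sp.ι (σ r) * sp.x + sp.x ^ i * sp.ι (δ r) := by
        rw [pow_succ, mul_assoc, sp.comm, mul_add, ← mul_assoc]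
      rw [hx, op_add, add_smul, pol_add]
      congr 1
      · rw [op_mul, mul_smul, op_mul, mul_smul, h₁, x_smul_pol]
      · rw [op_mul, mul_smul, h₂]
    · rw [Finsupp.add_apply, h₂top _ (by omega), add_zero,
        show i + 1 = Nat.succ i from rfl,
        Finsupp.mapDomain_apply Nat.succ_injective, h₁i,
        Function.iterate_succ_apply]
    · intro l hl
      obtain ⟨l', rfl⟩ : ∃ l', l = l' + 1 := ⟨l - 1, by omega⟩
      rw [Finsupp.add_apply, h₂top _ (by omega), add_zero,
        show l' + 1 = Nat.succ l' from rfl,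
        Finsupp.mapDomain_apply Nat.succ_injective, h₁top _ (by omega)]

lemma keyc (k : ℕ) (r : R) : ∀ c : ℕ →₀ M, (∀ i, k < i → c i = 0) →
    ∃ d : ℕ →₀ M, op (sp.ι r) • pol sp im c = pol sp im d ∧
      d k = op ((⇑σ)^[k] r) • c k ∧ ∀ l, k < l → d l = 0 := by
  induction k with
  | zero =>
    intro c hc
    have hcs : c = Finsupp.single 0 (c 0) := by
      ext i
      cases i with
      | zero => simp
      | succ n => rw [hc _ (Nat.succ_pos n), Finsupp.single_eq_of_ne (by omega)]
    obtain ⟨d, hd, hdk, hdtop⟩ := key sp im 0 r (c 0)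
    exact ⟨d, by rw [hcs, pol_single]; exact hd, hdk, hdtop⟩
  | succ k ih =>
    intro c hc
    have hc' : ∀ i, k < i → (c.erase (k + 1)) i = 0 := fun i hi => by
      rcases eq_or_ne i (k + 1) with rfl | h
      · exact Finsupp.erase_same
      · rw [Finsupp.erase_ne h]; exact hc i (by omega)
    obtain ⟨d', hd', -, hd'top⟩ := ih (c.erase (k + 1)) hc'
    obtain ⟨d'', hd'', hd''k, hd''top⟩ := key sp im (k + 1) r (c (k + 1))
    refine ⟨d' + d'', ?_, ?_, ?_⟩
    · conv_lhs => rw [← Finsupp.erase_add_single (k + 1) c]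
      rw [pol_add, smul_add, pol_add, hd', pol_single, hd'']
    · rw [Finsupp.add_apply, hd'top _ (by omega), hd''k, zero_add]
    · intro l hl
      rw [Finsupp.add_apply, hd'top _ (by omega), hd''top _ hl, add_zero]

end Aux

/-- if `m` is a good polynomial of degree `k` with leading coefficient `m_k ≠ 0`,
then `ann_R(m) = σ⁻ᵏ(ann_R(m_k))`. -/
theorem stmt4 (sp : SkewPoly R S σ δ) (im : Induced R S M N sp) (hδ : IsSigmaDeriv σ δ)
    (ν : N) (k : ℕ) (c : ℕ →₀ M) (hc : pol sp im c = ν) (hk : c k ≠ 0)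
    (htop : ∀ i, k < i → c i = 0) (hgood : GoodAt sp im ν k) :
    {r : R | op (sp.ι r) • ν = 0} = {r : R | op ((⇑σ)^[k] r) • c k = 0} := by
  ext r
  simp only [Set.mem_setOf_eq]
  obtain ⟨d, hd, hdk, hdtop⟩ := keyc sp im k r c htop
  rw [hc] at hd
  constructor
  · intro h
    have h0 : d = 0 := pol_injective sp im ((hd.symm.trans h).trans (pol_zero sp im).symm)
    rw [← hdk, h0]; simp
  · intro h
    by_contra hne
    obtain ⟨c', hc', hk', -⟩ := hgood.2 r hne
    have hcd : c' = d := pol_injective sp im (hc'.trans hd)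
    exact hk' (by rw [hcd, hdk, h])
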